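/- arXiv:1405.2667 — 3 statements merged into one kernel-verified Lean document; each statement's English description precedes it below -/
import Mathlib

section
/- Let G be a group acting by isometries on a metric space X, with word metric |·| on G from a finite generating set S. If for every ε > 0 there exists x ∈ X with d(s·x, x) ≤ ε for all s ∈ S, then for every x ∈ X, d(g·x, x)/|g| → 0 as |g| → ∞. -/
/-!
Almost fixed points give, for every `ε`, a point `y` moved by at most `ε / 2` by each generator.
By the triangle inequality along a geodesic word, `d(g y, y) ≤ |g| ε / 2`, and moving the base
point from `y` to `x` costs at most `2 d(x, y)`, a constant. Hence `d(g x, x) / |g| ≤ ε` once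
`|g| ≥ 4 d(x, y) / ε`.
-/

open Filter

noncomputable def wordLength {G : Type*} [Group G] (S : Set G) (g : G) : ℕ :=
  sInf {n | ∃ l : List G, (∀ s ∈ l, s ∈ S) ∧ l.prod = g ∧ l.length = n}

lemma Subgroup.closure_toSubmonoid_of_inv_subset {G : Type*} [Group G] {S : Set G}
    (hS : S⁻¹ ⊆ S) : (Subgroup.closure S).toSubmonoid = Submonoid.closure S := by
  rw [Subgroup.closure_toSubmonoid, Set.union_eq_left.mpr hS]

lemma exists_list_length_eq_wordLength {G : Type*} [Group G] {S : Set G} {g : G}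
    (hg : g ∈ Submonoid.closure S) :
    ∃ l : List G, (∀ s ∈ l, s ∈ S) ∧ l.prod = g ∧ l.length = wordLength S g := by
  obtain ⟨l, hlS, hprod⟩ := Submonoid.exists_list_of_mem_closure hg
  exact Nat.sInf_mem (s := {n | ∃ l : List G, (∀ s ∈ l, s ∈ S) ∧ l.prod = g ∧ l.length = n})
    ⟨l.length, l, hlS, hprod, rfl⟩

section IsometricAction

variable {G X : Type*} [Group G] [PseudoMetricSpace X] [MulAction G X] [IsIsometricSMul G X]

lemma dist_list_prod_smul_le {y : X} {c : ℝ} :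
    ∀ l : List G, (∀ s ∈ l, dist (s • y) y ≤ c) → dist (l.prod • y) y ≤ l.length * c
  | [], _ => by simp
  | a :: l, h => by
    have hl := dist_list_prod_smul_le l fun s hs => h s (List.mem_cons_of_mem a hs)
    calc dist ((a :: l).prod • y) y ≤ dist (a • l.prod • y) (a • y) + dist (a • y) y := by
          rw [List.prod_cons, mul_smul]; exact dist_triangle _ _ _
      _ = dist (l.prod • y) y + dist (a • y) y := by rw [dist_smul]
      _ ≤ l.length * c + c := add_le_add hl (h a List.mem_cons_self)
      _ = (a :: l).length * c := by push_cast [List.length_cons]; ring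

lemma dist_smul_le_wordLength_mul {S : Set G} {g : G} (hg : g ∈ Submonoid.closure S)
    {y : X} {c : ℝ} (hy : ∀ s ∈ S, dist (s • y) y ≤ c) :
    dist (g • y) y ≤ wordLength S g * c := by
  obtain ⟨l, hlS, rfl, hlen⟩ := exists_list_length_eq_wordLength hg
  rw [← hlen]
  exact dist_list_prod_smul_le l fun s hs => hy s (hlS s hs)

lemma dist_smul_le_dist_smul_add (g : G) (x y : X) :
    dist (g • x) x ≤ dist (g • y) y + 2 * dist x y :=
  calc dist (g • x) x ≤ dist (g • x) (g • y) + dist (g • y) y + dist y x := dist_triangle4 _ _ _ _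
    _ = dist (g • y) y + 2 * dist x y := by rw [dist_smul, dist_comm y x]; ring

end IsometricAction

lemma div_le_of_le_mul_half_add {a D ε n : ℝ} (hε : 0 < ε) (hn : 0 < n)
    (hnD : 4 * D / ε ≤ n) (ha : a ≤ n * (ε / 2) + 2 * D) : a / n ≤ ε := by
  rw [div_le_iff₀ hε] at hnD
  rw [div_le_iff₀ hn]
  linarith

/-- If an isometric action of a finitely generated group has almost fixed points,
then its orbits are sublinear. -/
theorem stmt0 {G X : Type*} [Group G] [MetricSpace X] [MulAction G X]
    (hiso : ∀ g : G, Isometry (fun x : X => g • x))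
    (S : Finset G) (hgen : Subgroup.closure (S : Set G) = ⊤)
    (hsymm : ∀ s ∈ S, s⁻¹ ∈ S)
    (haf : ∀ ε : ℝ, 0 < ε → ∃ x : X, ∀ s ∈ S, dist (s • x) x ≤ ε) :
    ∀ x : X, ∀ ε : ℝ, 0 < ε → ∃ N : ℕ, ∀ g : G,
      N ≤ wordLength (S : Set G) g →
      dist (g • x) x / (wordLength (S : Set G) g : ℝ) ≤ ε := by
  have : IsIsometricSMul G X := ⟨hiso⟩
  have hmon : Submonoid.closure (S : Set G) = ⊤ := by
    rw [← Subgroup.closure_toSubmonoid_of_inv_subset fun s hs => by simpa using hsymm _ hs, hgen]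
    rfl
  intro x ε hε
  obtain ⟨y, hy⟩ := haf (ε / 2) (half_pos hε)
  refine ⟨⌈4 * dist x y / ε⌉₊ + 1, fun g hg => ?_⟩
  refine div_le_of_le_mul_half_add hε (by exact_mod_cast (Nat.succ_pos _).trans_le hg)
    ((Nat.le_ceil _).trans (by exact_mod_cast (Nat.le_succ _).trans hg)) ?_
  calc dist (g • x) x ≤ dist (g • y) y + 2 * dist x y := dist_smul_le_dist_smul_add g x y
    _ ≤ wordLength (S : Set G) g * (ε / 2) + 2 * dist x y :=
        add_le_add_left (dist_smul_le_wordLength_mul (hmon ▸ Submonoid.mem_top g) hy) _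
end

section
/- Let π be a norm-preserving linear representation of ℤ on a Banach space B such that the Cesàro averages (1/n)Σ_{k=1}^n π(k)v converge in norm to 0 for every v ∈ B (Mean Ergodic Theorem with no invariant vectors). Let G be a group containing a central element c with π the restriction of a representation of G, and let b ∈ Z¹(G, π) be a 1-cocycle, i.e. b(gh) = π(g)b(h) + b(g). Then the vectors v_n := (1/n)Σ_{k=1}^n b(cᵏ) satisfy ‖π(g)v_n + b(g) − v_n‖ → 0 as n → ∞, for every g ∈ G. -/
open Filter

/-- If the Cesàro averages of the restriction of `π` to the central element `c` tend to `0`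
(Mean Ergodic Theorem with no invariant vectors), then the Cesàro averages
`v_n = (1/n) ∑_{k=1}^n b(c^k)` of a 1-cocycle `b` are almost fixed points of the
associated affine action. -/
theorem stmt6 {G B : Type*} [Group G] [NormedAddCommGroup B] [NormedSpace ℝ B]
    [CompleteSpace B]
    (π : G →* (B →L[ℝ] B)) (hnorm : ∀ (g : G) (v : B), ‖π g v‖ = ‖v‖)
    (c : G) (hc : ∀ g : G, c * g = g * c)
    (hme : ∀ v : B, Tendsto
      (fun n : ℕ => (n : ℝ)⁻¹ • ∑ k ∈ Finset.range n, π (c ^ (k + 1)) v)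
      atTop (nhds 0))
    (b : G → B) (hb : ∀ g h : G, b (g * h) = π g (b h) + b g) :
    ∀ g : G, Tendsto (fun n : ℕ =>
      ‖π g ((n : ℝ)⁻¹ • ∑ k ∈ Finset.range n, b (c ^ (k + 1))) + b g
        - (n : ℝ)⁻¹ • ∑ k ∈ Finset.range n, b (c ^ (k + 1))‖) atTop (nhds 0) := by
  intro g
  have key : ∀ k : ℕ,
      π g (b (c ^ (k + 1))) = π (c ^ (k + 1)) (b g) + b (c ^ (k + 1)) - b g := by
    intro k
    have hcomm : Commute c g := hc g
    have hcg : g * c ^ (k + 1) = c ^ (k + 1) * g := ((hcomm.pow_left (k + 1)).symm).eq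
    have h1 := hb g (c ^ (k + 1))
    have h2 := hb (c ^ (k + 1)) g
    rw [hcg, h2] at h1
    exact (eq_sub_of_add_eq h1.symm)
  have hnorm0 : Tendsto
      (fun n : ℕ => ‖(n : ℝ)⁻¹ • ∑ k ∈ Finset.range n, π (c ^ (k + 1)) (b g)‖)
      atTop (nhds 0) := by
    simpa using (hme (b g)).norm
  refine hnorm0.congr' ?_
  filter_upwards [eventually_ge_atTop 1] with n hn
  congr 1
  have hn0 : (n : ℝ) ≠ 0 := by positivity
  rw [map_smul, map_sum]
  have hsum : ∑ k ∈ Finset.range n, π g (b (c ^ (k + 1)))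
      = (∑ k ∈ Finset.range n, π (c ^ (k + 1)) (b g))
        + (∑ k ∈ Finset.range n, b (c ^ (k + 1))) - n • b g := by
    simp only [key, Finset.sum_sub_distrib, Finset.sum_add_distrib, Finset.sum_const,
      Finset.card_range]
  rw [hsum, smul_sub, smul_add]
  have : (n : ℝ)⁻¹ • (n • b g) = b g := by
    rw [← Nat.cast_smul_eq_nsmul ℝ, smul_smul, inv_mul_cancel₀ hn0, one_smul]
  rw [this]
  abel
end

section
/- Let π be a linear norm-preserving representation of a group G on a normed space B, b ∈ Z¹(G, π) a 1-cocycle, and suppose the associated affine action σ(g)v = π(g)v + b(g) has almost fixed points: for every ε > 0 there is v ∈ B with ‖σ(s)v − v‖ ≤ ε for all s in a finite generating set S of G. Then ‖b(g)‖/|g|_G → 0 as |g|_G → ∞. -/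
/-- If the affine action associated to a 1-cocycle `b` of a norm-preserving representation
has almost fixed points, then `‖b(g)‖/|g| → 0` as `|g| → ∞`. -/
theorem stmt8 {G B : Type*} [Group G] [NormedAddCommGroup B] [NormedSpace ℝ B]
    (π : G →* (B →L[ℝ] B)) (hnorm : ∀ (g : G) (v : B), ‖π g v‖ = ‖v‖)
    (b : G → B) (hb : ∀ g h : G, b (g * h) = π g (b h) + b g)
    (S : Finset G) (hgen : Subgroup.closure (S : Set G) = ⊤)
    (hsymm : ∀ s ∈ S, s⁻¹ ∈ S)
    (haf : ∀ ε : ℝ, 0 < ε → ∃ v : B, ∀ s ∈ S, ‖π s v + b s - v‖ ≤ ε) :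
    ∀ ε : ℝ, 0 < ε → ∃ N : ℕ, ∀ g : G,
      N ≤ wordLength (S : Set G) g →
      ‖b g‖ / (wordLength (S : Set G) g : ℝ) ≤ ε := by
  intro ε hε
  obtain ⟨v, hv⟩ := haf (ε / 2) (by linarith)
  have hb1 : b 1 = 0 := by
    have h := hb 1 1
    simp at h
    exact h
  -- every g is a product of a list with entries in S
  have hne : ∀ g : G,
      {n | ∃ l : List G, (∀ s ∈ l, s ∈ S) ∧ l.prod = g ∧ l.length = n}.Nonempty := by
    intro g
    have hg : g ∈ Subgroup.closure (S : Set G) := by rw [hgen]; trivial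
    have hg' : g ∈ Submonoid.closure (S : Set G) := by
      induction hg using Subgroup.closure_induction with
      | mem x hx => exact Submonoid.subset_closure hx
      | one => exact Submonoid.one_mem _
      | mul x y _ _ hx hy => exact Submonoid.mul_mem _ hx hy
      | inv x hx ihx =>
        clear hx
        induction ihx using Submonoid.closure_induction with
        | mem y hy => exact Submonoid.subset_closure (by simpa using hsymm y hy)
        | one => simpa using Submonoid.one_mem _
        | mul y z _ _ hy hz =>
          rw [mul_inv_rev]; exact Submonoid.mul_mem _ hz hy
    obtain ⟨l, hl, hp⟩ := Submonoid.exists_list_of_mem_closure hg'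
    exact ⟨l.length, l, hl, hp, rfl⟩
  -- key estimate
  have key : ∀ l : List G, (∀ s ∈ l, s ∈ S) →
      ‖π l.prod v + b l.prod - v‖ ≤ l.length * (ε / 2) := by
    intro l
    induction l with
    | nil => intro _; simp [hb1]
    | cons s t ih =>
      intro hmem
      have hS : s ∈ S := hmem s (by simp)
      have ht : ∀ x ∈ t, x ∈ S := fun x hx => hmem x (by simp [hx])
      have h1 := ih ht
      have h2 := hv s hS
      have expand : π (s :: t).prod v + b (s :: t).prod - v
          = (π s) (π t.prod v + b t.prod - v) + (π s v + b s - v) := by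
        rw [List.prod_cons, hb s t.prod, map_mul]
        simp only [map_add, map_sub, ContinuousLinearMap.mul_apply]
        abel
      rw [expand]
      calc ‖(π s) (π t.prod v + b t.prod - v) + (π s v + b s - v)‖
          ≤ ‖(π s) (π t.prod v + b t.prod - v)‖ + ‖π s v + b s - v‖ := norm_add_le _ _
        _ = ‖π t.prod v + b t.prod - v‖ + ‖π s v + b s - v‖ := by rw [hnorm]
        _ ≤ t.length * (ε / 2) + ε / 2 := add_le_add h1 h2
        _ = (s :: t).length * (ε / 2) := by
            simp [List.length_cons]; push_cast; ring
  refine ⟨⌈4 * ‖v‖ / ε⌉₊ + 1, fun g hg => ?_⟩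
  set n := wordLength (S : Set G) g with hn
  obtain ⟨l, hl, hlp, hll⟩ : n ∈ {m | ∃ l : List G,
      (∀ s ∈ l, s ∈ S) ∧ l.prod = g ∧ l.length = m} := Nat.sInf_mem (hne g)
  have hkey : ‖π g v + b g - v‖ ≤ n * (ε / 2) := by
    rw [← hlp, ← hll]; exact key l hl
  have hbg : ‖b g‖ ≤ n * (ε / 2) + 2 * ‖v‖ := by
    have : ‖b g‖ ≤ ‖π g v + b g - v‖ + ‖π g v‖ + ‖v‖ := by
      have h := norm_add₃_le (a := π g v + b g - v) (b := -(π g v)) (c := v)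
      simp only [norm_neg] at h
      calc ‖b g‖ = ‖(π g v + b g - v) + -(π g v) + v‖ := by congr 1; abel
        _ ≤ _ := h
    rw [hnorm] at this
    linarith
  have hn1 : (1 : ℕ) ≤ n := le_trans (by omega) hg
  have hnpos : (0 : ℝ) < n := by exact_mod_cast hn1
  have hceil : 4 * ‖v‖ / ε ≤ (n : ℝ) := by
    have h1 : 4 * ‖v‖ / ε ≤ (⌈4 * ‖v‖ / ε⌉₊ : ℝ) := Nat.le_ceil _
    have h2 : (⌈4 * ‖v‖ / ε⌉₊ : ℝ) ≤ n := by exact_mod_cast le_trans (by omega) hg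
    linarith
  have hvn : 2 * ‖v‖ ≤ n * (ε / 2) := by
    rw [div_le_iff₀ hε] at hceil
    nlinarith
  rw [div_le_iff₀ hnpos]
  linarith
end
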